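/- arXiv:1907.05502 — 2 statements merged into one kernel-verified Lean document; each statement's English description precedes it below -/
import Mathlib

section
/- Let a be a sequence in the class S and A ⊆ ℕ. Suppose (n_i)_{i∈ℕ} is an increasing sequence of integers such that (∑_{j=0}^{n_i} a_j·1_A(j)) / (∑_{j=0}^{n_i} a_j) → δ as i → ∞. Then for every k ∈ ℕ, (∑_{j=0}^{n_i} a_j·1_{A−k}(j)) / (∑_{j=0}^{n_i} a_j) → δ as i → ∞, and d̄_a(A) = d̄_a(A − k). -/
/-!
Shifting `A` by one changes `∑_{j ≤ N} a_j 1_A(j)` by at most `a_N`: the two sums differ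
termwise by at most `a_{j+1} - a_j`, which telescopes, plus two boundary terms. Hence shifting
by `k` changes the weighted density at `N` by at most `k a_N / ∑_{j ≤ N} a_j ≤ k v_N(a) → 0`,
so the densities of `A` and `A - k` have the same limits along any subsequence and the same
limsup.
-/

open Filter Topology

/-- The weighted sum `∑_{j=0}^{N} a_j · 1_A(j)`. -/
noncomputable def wSum (a : ℕ → ℝ) (A : Set ℕ) (N : ℕ) : ℝ :=
  ∑ j ∈ Finset.range (N + 1), Set.indicator A a j

/-- The upper `a`-density `d̄_a(A)`. -/
noncomputable def upperDensWith (a : ℕ → ℝ) (A : Set ℕ) : ℝ :=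
  Filter.limsup (fun N => wSum a A N / ∑ j ∈ Finset.range (N + 1), a j) Filter.atTop

/-- The lower `a`-density `d_a(A)`. -/
noncomputable def lowerDensWith (a : ℕ → ℝ) (A : Set ℕ) : ℝ :=
  Filter.liminf (fun N => wSum a A N / ∑ j ∈ Finset.range (N + 1), a j) Filter.atTop

/-- The (unweighted) upper density `d̄(A)`. -/
noncomputable def upperDens (A : Set ℕ) : ℝ :=
  Filter.limsup
    (fun N : ℕ => (∑ j ∈ Finset.range (N + 1), Set.indicator A (fun _ => (1 : ℝ)) j) / (N + 1))
    Filter.atTop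

/-- The upper Banach density `B̄d(A) = lim_N b_N / N`, `b_N = limsup_k #(A ∩ [k+1, k+N])`
(the limit exists, so it coincides with the limsup used here). -/
noncomputable def upperBanachDens (A : Set ℕ) : ℝ :=
  Filter.limsup
    (fun N : ℕ =>
      (Filter.limsup
          (fun k : ℕ => ∑ j ∈ Finset.Icc (k + 1) (k + N), Set.indicator A (fun _ => (1 : ℝ)) j)
          Filter.atTop) / (N : ℝ))
    Filter.atTop

/-- `v_n(a) = a_n / ∑_{j=0}^{n-1} a_j`. -/
noncomputable def vSeq (a : ℕ → ℝ) (n : ℕ) : ℝ := a n / ∑ j ∈ Finset.range n, a j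

/-- The class `S` of weights: positive non-decreasing sequences tending to `+∞` such that
`(v_n(a))_{n ≥ 1}` is non-increasing and tends to `0`. -/
def memS (a : ℕ → ℝ) : Prop :=
  (∀ n, 0 < a n) ∧ Monotone a ∧ Filter.Tendsto a Filter.atTop Filter.atTop ∧
    (∀ m n : ℕ, 1 ≤ m → m ≤ n → vSeq a n ≤ vSeq a m) ∧
    Filter.Tendsto (vSeq a) Filter.atTop (nhds 0)

/-- `A - k = {n : n + k ∈ A}`. -/
def shiftSet (A : Set ℕ) (k : ℕ) : Set ℕ := {n : ℕ | n + k ∈ A}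

/-- A set of natural numbers has bounded gaps (is syndetic). -/
def Syndetic (K : Set ℕ) : Prop := ∃ m : ℕ, ∀ n : ℕ, (K ∩ Set.Icc n (n + m)).Nonempty

/-- The return set `N(x, U) = {n : T^n x ∈ U}`. -/
def retSet {X : Type*} [NormedAddCommGroup X] [NormedSpace ℂ X] (T : X →L[ℂ] X) (x : X)
    (U : Set X) : Set ℕ :=
  {n : ℕ | (T ^ n) x ∈ U}

/-- The set of hypercyclic vectors of `T`. -/
def HCSet {X : Type*} [NormedAddCommGroup X] [NormedSpace ℂ X] (T : X →L[ℂ] X) : Set X :=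
  {x : X | Dense (Set.range fun n : ℕ => (T ^ n) x)}

/-- The set of `U`-frequently hypercyclic vectors of `T`. -/
def UFHCSet {X : Type*} [NormedAddCommGroup X] [NormedSpace ℂ X] (T : X →L[ℂ] X) : Set X :=
  {x : X | ∀ U : Set X, IsOpen U → U.Nonempty → 0 < upperDens (retSet T x U)}

/-- The set of `U`-frequently hypercyclic vectors of `T` with respect to the weight `a`. -/
def UFHCaSet {X : Type*} [NormedAddCommGroup X] [NormedSpace ℂ X] (a : ℕ → ℝ)
    (T : X →L[ℂ] X) : Set X :=
  {x : X | ∀ U : Set X, IsOpen U → U.Nonempty → 0 < upperDensWith a (retSet T x U)}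

/-- The set of reiteratively hypercyclic vectors of `T`. -/
def RHCSet {X : Type*} [NormedAddCommGroup X] [NormedSpace ℂ X] (T : X →L[ℂ] X) : Set X :=
  {x : X | ∀ U : Set X, IsOpen U → U.Nonempty → 0 < upperBanachDens (retSet T x U)}

/-- `T` is `𝒜`-hypercyclic. -/
def AHC {X : Type*} [NormedAddCommGroup X] [NormedSpace ℂ X] (𝒜 : Set (Set ℕ))
    (T : X →L[ℂ] X) : Prop :=
  ∃ x : X, ∀ U : Set X, IsOpen U → U.Nonempty → retSet T x U ∈ 𝒜

/-- The `n`-fold product `T × ⋯ × T` acting diagonally on `Fin n → X`. -/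
noncomputable def nfold {X : Type*} [NormedAddCommGroup X] [NormedSpace ℂ X] (T : X →L[ℂ] X)
    (n : ℕ) : (Fin n → X) →L[ℂ] (Fin n → X) :=
  ContinuousLinearMap.pi fun i => T.comp (ContinuousLinearMap.proj i)

open Finset

section LimsupAdd

variable {ι α : Type*} [AddCommGroup α] [ConditionallyCompleteLinearOrder α] [DenselyOrdered α]
  [AddLeftMono α] [TopologicalSpace α] [OrderTopology α] {f : Filter ι} [f.NeBot] {u v : ι → α}

theorem limsup_add_eq_of_tendsto_zero (hu_le : IsBoundedUnder (· ≤ ·) f u)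
    (hu_ge : IsBoundedUnder (· ≥ ·) f u) (hv : Tendsto v f (𝓝 0)) :
    limsup (u + v) f = limsup u f := by
  have hu_co : IsCoboundedUnder (· ≤ ·) f u := hu_ge.isCoboundedUnder_le
  apply le_antisymm
  · calc limsup (u + v) f
        ≤ limsup u f + limsup v f :=
          limsup_add_le hu_ge hu_le hv.isCoboundedUnder_le hv.isBoundedUnder_le
      _ = limsup u f := by rw [hv.limsup_eq, add_zero]
  · calc limsup u f
        = limsup u f + liminf v f := by rw [hv.liminf_eq, add_zero]
      _ ≤ limsup (u + v) f :=
          le_limsup_add hu_le hu_co hv.isBoundedUnder_le hv.isBoundedUnder_ge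

end LimsupAdd

noncomputable def wRatio (a : ℕ → ℝ) (A : Set ℕ) (N : ℕ) : ℝ :=
  wSum a A N / ∑ j ∈ range (N + 1), a j

section Weighted

variable {a : ℕ → ℝ}

theorem wSum_nonneg (h0 : ∀ n, 0 ≤ a n) (A : Set ℕ) (N : ℕ) : 0 ≤ wSum a A N :=
  sum_nonneg fun j _ => Set.indicator_nonneg (fun n _ => h0 n) j

theorem wSum_le_sum (h0 : ∀ n, 0 ≤ a n) (A : Set ℕ) (N : ℕ) :
    wSum a A N ≤ ∑ j ∈ range (N + 1), a j :=
  sum_le_sum fun j _ => Set.indicator_le_self' (fun n _ => h0 n) j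

theorem wRatio_mem_Icc (h0 : ∀ n, 0 ≤ a n) (A : Set ℕ) (N : ℕ) : wRatio a A N ∈ Set.Icc 0 1 :=
  ⟨div_nonneg (wSum_nonneg h0 A N) (sum_nonneg fun j _ => h0 j),
    div_le_one_of_le₀ (wSum_le_sum h0 A N) (sum_nonneg fun j _ => h0 j)⟩

theorem indicator_succ_sub_indicator_shiftSet_one_mem_Icc (hmono : Monotone a) (A : Set ℕ)
    (j : ℕ) :
    A.indicator a (j + 1) - (shiftSet A 1).indicator a j ∈ Set.Icc 0 (a (j + 1) - a j) := by
  have hj : a j ≤ a (j + 1) := hmono j.le_succ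
  by_cases h : j + 1 ∈ A
  · have h' : j ∈ shiftSet A 1 := h
    simp only [Set.indicator_of_mem h, Set.indicator_of_mem h', Set.mem_Icc]
    constructor <;> linarith
  · have h' : j ∉ shiftSet A 1 := h
    simp only [Set.indicator_of_notMem h, Set.indicator_of_notMem h', sub_zero, Set.mem_Icc]
    constructor <;> linarith

theorem abs_wSum_shiftSet_one_sub_le (h0 : ∀ n, 0 ≤ a n) (hmono : Monotone a) (A : Set ℕ)
    (N : ℕ) : |wSum a (shiftSet A 1) N - wSum a A N| ≤ a N := by
  have hA : wSum a A N = ∑ j ∈ range N, A.indicator a (j + 1) + A.indicator a 0 :=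
    sum_range_succ' _ _
  have hB : wSum a (shiftSet A 1) N =
      ∑ j ∈ range N, (shiftSet A 1).indicator a j + (shiftSet A 1).indicator a N :=
    sum_range_succ _ _
  have hterm := indicator_succ_sub_indicator_shiftSet_one_mem_Icc hmono A
  have hD0 : 0 ≤ ∑ j ∈ range N, (A.indicator a (j + 1) - (shiftSet A 1).indicator a j) :=
    sum_nonneg fun j _ => (hterm j).1
  have hD1 : ∑ j ∈ range N, (A.indicator a (j + 1) - (shiftSet A 1).indicator a j) ≤
      a N - a 0 :=
    (sum_le_sum fun j _ => (hterm j).2).trans_eq (sum_range_sub a N)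
  rw [sum_sub_distrib] at hD0 hD1
  have hA0 : A.indicator a 0 ∈ Set.Icc 0 (a 0) :=
    ⟨Set.indicator_nonneg (fun n _ => h0 n) 0, Set.indicator_le_self' (fun n _ => h0 n) 0⟩
  have hBN : (shiftSet A 1).indicator a N ∈ Set.Icc 0 (a N) :=
    ⟨Set.indicator_nonneg (fun n _ => h0 n) N, Set.indicator_le_self' (fun n _ => h0 n) N⟩
  rw [abs_le, hA, hB]
  constructor <;> linarith [hA0.1, hA0.2, hBN.1, hBN.2]

theorem abs_wSum_shiftSet_sub_le (h0 : ∀ n, 0 ≤ a n) (hmono : Monotone a) (A : Set ℕ)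
    (k N : ℕ) : |wSum a (shiftSet A k) N - wSum a A N| ≤ k * a N := by
  induction k generalizing A with
  | zero => simp [shiftSet]
  | succ k ih =>
    -- `A - (k + 1) = (A - 1) - k` holds definitionally
    calc |wSum a (shiftSet (shiftSet A 1) k) N - wSum a A N|
        ≤ |wSum a (shiftSet (shiftSet A 1) k) N - wSum a (shiftSet A 1) N| +
            |wSum a (shiftSet A 1) N - wSum a A N| := abs_sub_le _ _ _
      _ ≤ k * a N + a N := add_le_add (ih _) (abs_wSum_shiftSet_one_sub_le h0 hmono A N)
      _ = (k + 1 : ℕ) * a N := by push_cast; ring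

theorem abs_wRatio_shiftSet_sub_le (h0 : ∀ n, 0 ≤ a n) (hmono : Monotone a) (A : Set ℕ)
    (k N : ℕ) :
    |wRatio a (shiftSet A k) N - wRatio a A N| ≤ k * (a N / ∑ j ∈ range (N + 1), a j) := by
  have hS : 0 ≤ ∑ j ∈ range (N + 1), a j := sum_nonneg fun j _ => h0 j
  rw [wRatio, wRatio, ← sub_div, abs_div, abs_of_nonneg hS, ← mul_div_assoc]
  exact div_le_div_of_nonneg_right (abs_wSum_shiftSet_sub_le h0 hmono A k N) hS

theorem tendsto_div_sum_range_succ_of_tendsto_vSeq (hpos : ∀ n, 0 < a n)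
    (hv : Tendsto (vSeq a) atTop (𝓝 0)) :
    Tendsto (fun N => a N / ∑ j ∈ range (N + 1), a j) atTop (𝓝 0) := by
  refine squeeze_zero' (Eventually.of_forall fun N => ?_) ?_ hv
  · exact div_nonneg (hpos N).le (sum_nonneg fun j _ => (hpos j).le)
  · filter_upwards [eventually_ge_atTop 1] with N hN
    have hprev : 0 < ∑ j ∈ range N, a j :=
      sum_pos (fun j _ => hpos j) (nonempty_range_iff.2 (by omega))
    exact div_le_div_of_nonneg_left (hpos N).le hprev
      (sum_le_sum_of_subset_of_nonneg (range_subset_range.2 N.le_succ)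
        fun j _ _ => (hpos j).le)

theorem tendsto_wRatio_shiftSet_sub (hpos : ∀ n, 0 < a n) (hmono : Monotone a)
    (hv : Tendsto (vSeq a) atTop (𝓝 0)) (A : Set ℕ) (k : ℕ) :
    Tendsto (fun N => wRatio a (shiftSet A k) N - wRatio a A N) atTop (𝓝 0) := by
  have hbound :
      Tendsto (fun N => (k : ℝ) * (a N / ∑ j ∈ range (N + 1), a j)) atTop (𝓝 0) := by
    simpa using (tendsto_div_sum_range_succ_of_tendsto_vSeq hpos hv).const_mul (k : ℝ)
  exact squeeze_zero_norm (abs_wRatio_shiftSet_sub_le (fun n => (hpos n).le) hmono A k) hbound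

end Weighted

/-- Shift invariance of weighted densities along a sequence: if the weighted densities of `A`
along `(n_i)` converge to `δ`, then so do those of `A - k`, and `d̄_a(A) = d̄_a(A - k)`. -/
theorem stmt_12 (a : ℕ → ℝ) (ha : memS a) (A : Set ℕ) (δ : ℝ) (ni : ℕ → ℕ)
    (hni : StrictMono ni)
    (hlim : Filter.Tendsto
      (fun i => wSum a A (ni i) / ∑ j ∈ Finset.range (ni i + 1), a j)
      Filter.atTop (nhds δ))
    (k : ℕ) :
    Filter.Tendsto
        (fun i => wSum a (shiftSet A k) (ni i) / ∑ j ∈ Finset.range (ni i + 1), a j)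
        Filter.atTop (nhds δ) ∧
      upperDensWith a A = upperDensWith a (shiftSet A k) := by
  obtain ⟨hpos, hmono, -, -, hv⟩ := ha
  have hdiff := tendsto_wRatio_shiftSet_sub hpos hmono hv A k
  have hshift : wRatio a (shiftSet A k) = wRatio a A + fun N =>
      wRatio a (shiftSet A k) N - wRatio a A N := by
    ext N; simp
  have hbdd := wRatio_mem_Icc (fun n => (hpos n).le) A
  constructor
  · simpa [wRatio] using hlim.add (hdiff.comp hni.tendsto_atTop)
  · change limsup (wRatio a A) atTop = limsup (wRatio a (shiftSet A k)) atTop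
    rw [hshift, limsup_add_eq_of_tendsto_zero (isBoundedUnder_of ⟨1, fun N => (hbdd N).2⟩)
      (isBoundedUnder_of ⟨0, fun N => (hbdd N).1⟩) hdiff]
end

section
/- Let a = (a_n)_{n∈ℕ} and b = (b_n)_{n∈ℕ} be positive sequences with ∑_n a_n = ∑_n b_n = +∞, and assume that the sequence (a_n/b_n)_{n∈ℕ} is eventually decreasing to zero. Then for every subset A ⊆ ℕ, d_b(A) ≤ d_a(A) ≤ d̄_a(A) ≤ d̄_b(A), where d and d̄ denote the lower and upper weighted densities respectively. -/
open Filter Topology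

/-!
Write `c_n = a_n / b_n`, so that `1_A(n) a_n - u a_n = c_n (1_A(n) b_n - u b_n)`. If
`wSum b A N ≤ u ∑_{j ≤ N} b_j` from some point on, Abel summation against the eventually
non-increasing non-negative weights `c_n` keeps `wSum a A N - u ∑_{j ≤ N} a_j` bounded above, and
dividing by `∑_{j ≤ N} a_j → ∞` gives `d̄_a(A) ≤ u`; hence `d̄_a(A) ≤ d̄_b(A)`. The lower
densities follow by passing to the complement, since `d_a(A) = 1 - d̄_a(Aᶜ)`.
-/

open Finset

lemma exists_sum_mul_le_of_antitoneOn {c d : ℕ → ℝ} {M : ℕ} (hc : ∀ n, M ≤ n → 0 ≤ c n)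
    (hanti : AntitoneOn c (Set.Ici M)) (hd : ∀ n, M ≤ n → ∑ j ∈ range (n + 1), d j ≤ 0) :
    ∃ C, ∀ N, M ≤ N → ∑ j ∈ range (N + 1), c j * d j ≤ C := by
  set S := fun N => ∑ j ∈ range (N + 1), c j * d j
  set P := fun N => ∑ j ∈ range (N + 1), d j
  -- `S N - c N * P N` is the Abel transform of `S`, and it is non-increasing from `M` on.
  have hmono : ∀ N, M ≤ N → S N - c N * P N ≤ S M - c M * P M := by
    intro N hN
    induction N, hN using Nat.le_induction with
    | base => exact le_rfl
    | succ n hn ih =>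
      have hstep : S (n + 1) - c (n + 1) * P (n + 1) =
          S n - c n * P n + (c n - c (n + 1)) * P n := by
        simp only [S, P, sum_range_succ _ (n + 1)]
        ring
      have hcn : c (n + 1) ≤ c n := hanti (Set.mem_Ici.2 hn) (Set.mem_Ici.2 (by omega)) n.le_succ
      nlinarith [hd n hn]
  exact ⟨S M - c M * P M, fun N hN => by nlinarith [hmono N hN, hc N hN, hd N hN]⟩

noncomputable def densRatio (a : ℕ → ℝ) (A : Set ℕ) (N : ℕ) : ℝ :=
  wSum a A N / ∑ j ∈ range (N + 1), a j

section densRatio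

variable {a : ℕ → ℝ} (ha : ∀ n, 0 < a n) (A : Set ℕ)
include ha

lemma sum_range_succ_pos (N : ℕ) : 0 < ∑ j ∈ range (N + 1), a j :=
  sum_pos (fun j _ => ha j) nonempty_range_add_one

lemma densRatio_nonneg (N : ℕ) : 0 ≤ densRatio a A N :=
  div_nonneg (sum_nonneg fun j _ => Set.indicator_nonneg (fun i _ => (ha i).le) j)
    (sum_range_succ_pos ha N).le

lemma densRatio_le_one (N : ℕ) : densRatio a A N ≤ 1 :=
  (div_le_one (sum_range_succ_pos ha N)).2
    (sum_le_sum fun j _ => Set.indicator_le_self' (fun i _ => (ha i).le) j)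

lemma densRatio_add_densRatio_compl (N : ℕ) : densRatio a A N + densRatio a Aᶜ N = 1 := by
  rw [densRatio, densRatio, ← add_div, wSum, wSum, ← sum_add_distrib,
    div_eq_one_iff_eq (sum_range_succ_pos ha N).ne']
  exact sum_congr rfl fun j _ => Set.indicator_self_add_compl_apply A a j

lemma isBoundedUnder_le_densRatio : IsBoundedUnder (· ≤ ·) atTop (densRatio a A) :=
  isBoundedUnder_of ⟨1, densRatio_le_one ha A⟩

lemma isBoundedUnder_ge_densRatio : IsBoundedUnder (· ≥ ·) atTop (densRatio a A) :=
  isBoundedUnder_of ⟨0, densRatio_nonneg ha A⟩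

lemma lowerDensWith_le_upperDensWith : lowerDensWith a A ≤ upperDensWith a A :=
  liminf_le_limsup (isBoundedUnder_le_densRatio ha A) (isBoundedUnder_ge_densRatio ha A)

lemma lowerDensWith_eq_one_sub_upperDensWith_compl :
    lowerDensWith a A = 1 - upperDensWith a Aᶜ := by
  have hcompl : (fun N => wSum a A N / ∑ j ∈ range (N + 1), a j) =
      fun N => 1 - densRatio a Aᶜ N :=
    funext fun N => eq_sub_of_add_eq (densRatio_add_densRatio_compl ha A N)
  rw [lowerDensWith, hcompl, liminf_const_sub _ _ _ (isBoundedUnder_le_densRatio ha Aᶜ)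
    (isCoboundedUnder_le_of_le atTop (densRatio_nonneg ha Aᶜ))]
  rfl

lemma upperDensWith_le_of_eventually_wSum_le
    (hasum : Tendsto (fun N => ∑ j ∈ range N, a j) atTop atTop) {u C : ℝ}
    (h : ∀ᶠ N in atTop, wSum a A N ≤ u * ∑ j ∈ range (N + 1), a j + C) :
    upperDensWith a A ≤ u := by
  have hlim : Tendsto (fun N => u + C / ∑ j ∈ range (N + 1), a j) atTop (nhds u) := by
    simpa using tendsto_const_nhds.add
      (tendsto_const_nhds.div_atTop (hasum.comp (tendsto_add_atTop_nat 1)))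
  have hle : densRatio a A ≤ᶠ[atTop] fun N => u + C / ∑ j ∈ range (N + 1), a j := by
    filter_upwards [h] with N hN
    rw [densRatio, div_le_iff₀ (sum_range_succ_pos ha N), add_mul,
      div_mul_cancel₀ _ (sum_range_succ_pos ha N).ne']
    linarith
  exact (limsup_le_limsup hle (isCoboundedUnder_le_of_le atTop (densRatio_nonneg ha A))
    hlim.isBoundedUnder_le).trans_eq hlim.limsup_eq

end densRatio

lemma exists_eventually_wSum_le_of_ratio_antitoneOn {a b : ℕ → ℝ} (ha : ∀ n, 0 ≤ a n)
    (hb : ∀ n, 0 < b n) {N₀ : ℕ} (hdec : AntitoneOn (fun n => a n / b n) (Set.Ici N₀))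
    (A : Set ℕ) {u : ℝ} (h : ∀ᶠ N in atTop, wSum b A N ≤ u * ∑ j ∈ range (N + 1), b j) :
    ∃ C, ∀ᶠ N in atTop, wSum a A N ≤ u * ∑ j ∈ range (N + 1), a j + C := by
  obtain ⟨M, hM⟩ := eventually_atTop.1 h
  have hweight : ∀ j, a j / b j * (A.indicator b j - u * b j) = A.indicator a j - u * a j := by
    intro j
    by_cases hj : j ∈ A <;> simp [hj] <;> field_simp [(hb j).ne']
  obtain ⟨C, hC⟩ := exists_sum_mul_le_of_antitoneOn (M := max M N₀)
    (c := fun n => a n / b n) (d := fun j => A.indicator b j - u * b j)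
    (fun n _ => div_nonneg (ha n) (hb n).le)
    (hdec.mono fun n hn => le_trans (le_max_right M N₀) hn)
    (fun n hn => by
      simpa [sum_sub_distrib, mul_sum, wSum] using hM n (le_trans (le_max_left _ _) hn))
  refine ⟨C, eventually_atTop.2 ⟨max M N₀, fun N hN => ?_⟩⟩
  have := hC N hN
  simp only [hweight, sum_sub_distrib, ← mul_sum] at this
  rw [wSum]
  linarith

lemma upperDensWith_le_upperDensWith_of_ratio_antitoneOn {a b : ℕ → ℝ} (ha : ∀ n, 0 < a n)
    (hb : ∀ n, 0 < b n) (hasum : Tendsto (fun N => ∑ j ∈ range N, a j) atTop atTop) {N₀ : ℕ}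
    (hdec : AntitoneOn (fun n => a n / b n) (Set.Ici N₀)) (A : Set ℕ) :
    upperDensWith a A ≤ upperDensWith b A := by
  refine le_of_forall_gt_imp_ge_of_dense fun u hu => ?_
  have hb_eventually : ∀ᶠ N in atTop, wSum b A N ≤ u * ∑ j ∈ range (N + 1), b j := by
    filter_upwards [eventually_lt_of_limsup_lt hu (isBoundedUnder_le_densRatio hb A)] with N hN
    exact ((div_lt_iff₀ (sum_range_succ_pos hb N)).1 hN).le
  obtain ⟨C, hC⟩ :=
    exists_eventually_wSum_le_of_ratio_antitoneOn (fun n => (ha n).le) hb hdec A hb_eventually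
  exact upperDensWith_le_of_eventually_wSum_le ha A hasum hC

theorem stmt_17_general (a b : ℕ → ℝ) (hapos : ∀ n, 0 < a n) (hbpos : ∀ n, 0 < b n)
    (hasum : Filter.Tendsto (fun N => ∑ j ∈ Finset.range N, a j) Filter.atTop Filter.atTop)
    (hdec : ∃ N₀ : ℕ, ∀ m n : ℕ, N₀ ≤ m → m ≤ n → a n / b n ≤ a m / b m)
    (A : Set ℕ) :
    lowerDensWith b A ≤ lowerDensWith a A ∧
      lowerDensWith a A ≤ upperDensWith a A ∧
      upperDensWith a A ≤ upperDensWith b A := by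
  obtain ⟨N₀, hdec⟩ := hdec
  have hanti : AntitoneOn (fun n => a n / b n) (Set.Ici N₀) := fun m hm n _ hmn => hdec m n hm hmn
  have hupper := upperDensWith_le_upperDensWith_of_ratio_antitoneOn hapos hbpos hasum hanti
  refine ⟨?_, lowerDensWith_le_upperDensWith hapos A, hupper A⟩
  rw [lowerDensWith_eq_one_sub_upperDensWith_compl hapos,
    lowerDensWith_eq_one_sub_upperDensWith_compl hbpos]
  linarith [hupper Aᶜ]

/-- If `(a_n/b_n)` is eventually decreasing to zero then
`d_b(A) ≤ d_a(A) ≤ d̄_a(A) ≤ d̄_b(A)` for every `A ⊆ ℕ`. -/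
theorem stmt_17 (a b : ℕ → ℝ) (hapos : ∀ n, 0 < a n) (hbpos : ∀ n, 0 < b n)
    (hasum : Filter.Tendsto (fun N => ∑ j ∈ Finset.range N, a j) Filter.atTop Filter.atTop)
    (hbsum : Filter.Tendsto (fun N => ∑ j ∈ Finset.range N, b j) Filter.atTop Filter.atTop)
    (hdec : ∃ N₀ : ℕ, ∀ m n : ℕ, N₀ ≤ m → m ≤ n → a n / b n ≤ a m / b m)
    (hzero : Filter.Tendsto (fun n => a n / b n) Filter.atTop (nhds 0))
    (A : Set ℕ) :
    lowerDensWith b A ≤ lowerDensWith a A ∧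
      lowerDensWith a A ≤ upperDensWith a A ∧
      upperDensWith a A ≤ upperDensWith b A :=
  stmt_17_general a b hapos hbpos hasum hdec A
end
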